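/- Let μ* be an upper quasi-density on ℕ⁺ with lower dual μ∗(X) = 1 − μ*(Xᶜ). For k ∈ ℕ⁺ and S ⊆ ℕ⁺ let w_k(S) be the number of residues h ∈ {0,…,k−1} such that μ*(S ∩ (k·ℕ⁺ + h)) > 0. Then for every X ⊆ ℕ⁺ and every k ∈ ℕ⁺: 1 − w_k(Xᶜ)/k ≤ μ∗(X) ≤ μ*(X) ≤ w_k(X)/k. -/

import Mathlib

/-!
Away from the finitely many integers below `k`, `ℕ⁺` is covered by the `k` classes `k·ℕ⁺ + h`.
Finite sets are null: a singleton `{n}` is null because `{2n + 1}` is both a translate of `{n}`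
and its dilate by `2`. Each class is, up to one point, an affine image `k·Z + c`, so its trace
on any set has upper quasi-density at most `1/k`, and the classes of non-positive quasi-density
contribute nothing; subadditivity then gives `μ* X ≤ w_k(X)/k`. Applying this to `Xᶜ` gives the
lower bound, and `1 = μ* ℕ⁺ ≤ μ* X + μ* Xᶜ` is the middle inequality.
-/

open Finset

def IsAffineHomogeneous (μ : Set ℕ+ → ℝ) : Prop :=
  ∀ (X : Set ℕ+) (h k : ℕ+), μ ((fun x => k * x + h) '' X) = ((k : ℕ) : ℝ)⁻¹ * μ X

def residueClass (k : ℕ+) (h : ℕ) : Set ℕ+ :=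
  {x : ℕ+ | ∃ m : ℕ+, (x : ℕ) = (k : ℕ) * (m : ℕ) + h}

/-- The paper's `w_k(S)`. -/
noncomputable def residueWeight (μ : Set ℕ+ → ℝ) (k : ℕ+) (S : Set ℕ+) : ℕ :=
  {h : ℕ | h < (k : ℕ) ∧ 0 < μ (S ∩ residueClass k h)}.ncard

section General

variable {α : Type*} {μ : Set α → ℝ}

theorem one_sub_map_compl_le (huniv : μ Set.univ = 1)
    (hsub : ∀ X Y : Set α, μ (X ∪ Y) ≤ μ X + μ Y) (X : Set α) : 1 - μ Xᶜ ≤ μ X := by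
  have h := hsub X Xᶜ
  rw [Set.union_compl_self, huniv] at h
  linarith

theorem map_nonpos_of_finite (hempty : μ ∅ = 0) (hsub : ∀ X Y : Set α, μ (X ∪ Y) ≤ μ X + μ Y)
    (hsingleton : ∀ a, μ {a} = 0) {F : Set α} (hF : F.Finite) : μ F ≤ 0 :=
  calc μ F = μ (⋃ a ∈ hF.toFinset, {a}) := by simp
    _ ≤ ∑ a ∈ hF.toFinset, μ {a} := apply_union_le_sum hempty (hsub _ _) _
    _ = 0 := by simp [hsingleton]

end General

theorem residueClass_eq (k : ℕ+) (h : ℕ) (c : ℕ+) (hc : (c : ℕ) = k + h) :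
    residueClass k h = {c} ∪ Set.range (fun x => k * x + c) := by
  ext x
  simp only [residueClass, Set.mem_ofPred_eq, Set.mem_union, Set.mem_singleton_iff,
    Set.mem_range]
  constructor
  · rintro ⟨m, hm⟩
    rcases eq_or_ne m 1 with rfl | hm1
    · exact Or.inl (PNat.eq (by simpa [hc] using hm))
    · obtain ⟨m, rfl⟩ := PNat.exists_eq_succ_of_ne_one hm1
      refine Or.inr ⟨m, PNat.eq ?_⟩
      simp only [PNat.add_coe, PNat.mul_coe, PNat.one_coe, hm, hc]
      ring
  · rintro (rfl | ⟨m, rfl⟩)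
    · exact ⟨1, by simp [hc]⟩
    · exact ⟨m + 1, by simp only [PNat.add_coe, PNat.mul_coe, PNat.one_coe, hc]; ring⟩

theorem iUnion_residueClass_union_Iio (k : ℕ+) :
    (⋃ h ∈ range (k : ℕ), residueClass k h) ∪ Set.Iio k = Set.univ := by
  refine Set.eq_univ_of_forall fun x => ?_
  by_cases hx : x < k
  · exact Or.inr hx
  · refine Or.inl (Set.mem_iUnion₂.mpr ⟨(x : ℕ) % k, mem_range.mpr (Nat.mod_lt _ k.pos), ?_⟩)
    refine ⟨⟨(x : ℕ) / k, Nat.div_pos (not_lt.mp hx) k.pos⟩, ?_⟩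
    exact (Nat.div_add_mod _ _).symm

namespace IsAffineHomogeneous

variable {μ : Set ℕ+ → ℝ}

theorem map_empty (hμ : IsAffineHomogeneous μ) : μ ∅ = 0 := by
  have h := hμ ∅ 1 2
  rw [Set.image_empty] at h
  push_cast at h
  linarith

theorem map_singleton (hμ : IsAffineHomogeneous μ) (a h k : ℕ+) :
    μ {k * a + h} = ((k : ℕ) : ℝ)⁻¹ * μ {a} := by
  simpa using hμ {a} h k

theorem map_singleton_eq_zero (hμ : IsAffineHomogeneous μ) (n : ℕ+) : μ {n} = 0 := by
  have htranslate := hμ.map_singleton n (n + 1) 1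
  have hdilate := hμ.map_singleton n 1 2
  rw [show 1 * n + (n + 1) = 2 * n + 1 from PNat.eq (by push_cast; ring)] at htranslate
  push_cast at htranslate hdilate
  linarith

theorem map_image_le (hle : ∀ X : Set ℕ+, μ X ≤ 1) (hμ : IsAffineHomogeneous μ)
    (X : Set ℕ+) (h k : ℕ+) : μ ((fun x => k * x + h) '' X) ≤ ((k : ℕ) : ℝ)⁻¹ := by
  rw [hμ]
  exact mul_le_of_le_one_right (by positivity) (hle X)

theorem map_inter_residueClass_le (hle : ∀ X : Set ℕ+, μ X ≤ 1)
    (hsub : ∀ X Y : Set ℕ+, μ (X ∪ Y) ≤ μ X + μ Y) (hμ : IsAffineHomogeneous μ)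
    (Y : Set ℕ+) (k : ℕ+) (h : ℕ) :
    μ (Y ∩ residueClass k h) ≤ ((k : ℕ) : ℝ)⁻¹ := by
  obtain ⟨c, hc⟩ : ∃ c : ℕ+, (c : ℕ) = k + h := ⟨⟨k + h, by positivity⟩, rfl⟩
  have hsplit : Y ∩ residueClass k h =
      (Y ∩ {c}) ∪ (fun x => k * x + c) '' ((fun x => k * x + c) ⁻¹' Y) := by
    rw [residueClass_eq k h c hc, Set.inter_union_distrib_left, Set.image_preimage_eq_inter_range]
  calc μ (Y ∩ residueClass k h)
      ≤ μ (Y ∩ {c}) + μ ((fun x => k * x + c) '' ((fun x => k * x + c) ⁻¹' Y)) :=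
        hsplit ▸ hsub _ _
    _ ≤ 0 + ((k : ℕ) : ℝ)⁻¹ :=
        add_le_add
          (map_nonpos_of_finite hμ.map_empty hsub hμ.map_singleton_eq_zero
            ((Set.finite_singleton c).inter_of_right Y))
          (map_image_le hle hμ _ _ _)
    _ = ((k : ℕ) : ℝ)⁻¹ := zero_add _

theorem map_le_residueWeight_div (hle : ∀ X : Set ℕ+, μ X ≤ 1)
    (hsub : ∀ X Y : Set ℕ+, μ (X ∪ Y) ≤ μ X + μ Y) (hμ : IsAffineHomogeneous μ)
    (Y : Set ℕ+) (k : ℕ+) :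
    μ Y ≤ (residueWeight μ k Y : ℝ) / (k : ℕ) := by
  classical
  set W := (range (k : ℕ)).filter fun h => 0 < μ (Y ∩ residueClass k h)
  have hW : residueWeight μ k Y = W.card := by
    rw [residueWeight, ← Set.ncard_coe_finset]
    congr 1
    ext h
    simp [W]
  have hcover : Y = (⋃ h ∈ range (k : ℕ), Y ∩ residueClass k h) ∪ (Y ∩ Set.Iio k) := by
    conv_lhs => rw [← Set.inter_univ Y, ← iUnion_residueClass_union_Iio k]
    rw [Set.inter_union_distrib_left, Set.inter_iUnion₂]
  calc μ Y = μ ((⋃ h ∈ range (k : ℕ), Y ∩ residueClass k h) ∪ (Y ∩ Set.Iio k)) :=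
        congrArg μ hcover
    _ ≤ μ (⋃ h ∈ range (k : ℕ), Y ∩ residueClass k h) + μ (Y ∩ Set.Iio k) := hsub _ _
    _ ≤ ∑ h ∈ range (k : ℕ), μ (Y ∩ residueClass k h) + 0 :=
        add_le_add (apply_union_le_sum hμ.map_empty (hsub _ _) _)
          (map_nonpos_of_finite hμ.map_empty hsub hμ.map_singleton_eq_zero
            ((Set.finite_Iio k).inter_of_right Y))
    _ ≤ ∑ h ∈ W, μ (Y ∩ residueClass k h) := by
        rw [add_zero, ← sum_filter_add_sum_filter_not (range (k : ℕ))
          (fun h => 0 < μ (Y ∩ residueClass k h))]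
        exact add_le_of_nonpos_right
          (sum_nonpos fun h hh => not_lt.mp (mem_filter.mp hh).2)
    _ ≤ W.card • ((k : ℕ) : ℝ)⁻¹ :=
        sum_le_card_nsmul _ _ _ fun h _ => map_inter_residueClass_le hle hsub hμ Y k h
    _ = (residueWeight μ k Y : ℝ) / (k : ℕ) := by rw [hW, nsmul_eq_mul, div_eq_mul_inv]

end IsAffineHomogeneous

theorem stmt16 (μ : Set ℕ+ → ℝ)
    (huniv : μ Set.univ = 1) (hle : ∀ X : Set ℕ+, μ X ≤ 1)
    (hsub : ∀ X Y : Set ℕ+, μ (X ∪ Y) ≤ μ X + μ Y)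
    (hhom : ∀ (X : Set ℕ+) (h k : ℕ+),
      μ ((fun x => k * x + h) '' X) = ((k : ℕ) : ℝ)⁻¹ * μ X)
    (X : Set ℕ+) (k : ℕ+) :
    1 - ({h : ℕ | h < (k : ℕ) ∧
          0 < μ (Xᶜ ∩ {x : ℕ+ | ∃ m : ℕ+, (x : ℕ) = (k : ℕ) * (m : ℕ) + h})}.ncard : ℝ) / (k : ℕ)
        ≤ 1 - μ Xᶜ ∧
    1 - μ Xᶜ ≤ μ X ∧
    μ X ≤ ({h : ℕ | h < (k : ℕ) ∧
          0 < μ (X ∩ {x : ℕ+ | ∃ m : ℕ+, (x : ℕ) = (k : ℕ) * (m : ℕ) + h})}.ncard : ℝ) / (k : ℕ) := by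
  have hμ : IsAffineHomogeneous μ := hhom
  have upper (Y : Set ℕ+) := IsAffineHomogeneous.map_le_residueWeight_div hle hsub hμ Y k
  exact ⟨sub_le_sub_left (upper Xᶜ) 1, one_sub_map_compl_le huniv hsub X, upper X⟩
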